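/- Let L > 0, δ > 0, N ≥ 3, h = L/(N−1) with h < 2δ, and let z_k = (k−1)h + δ for k = 1, …, N. Then for every fixed j ∈ {1, …, N}, ∏_{k ≠ j} |cos(π z_j/(L+2δ)) − cos(π z_k/(L+2δ))| ≥ |cos(πδ/(L+2δ)) − cos(π(δ+h)/(L+2δ))|^{N−1}. -/

import Mathlib

/-- `sin` on `[y, π - y]` is at least `sin y`, for `0 ≤ y`. -/
lemma aux_sin_lb {y x : ℝ} (h0 : 0 ≤ y) (h1 : y ≤ x) (h2 : x ≤ Real.pi - y) :
    Real.sin y ≤ Real.sin x := by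
  have hpi := Real.pi_pos
  rcases le_total x (Real.pi / 2) with hx | hx
  · exact Real.strictMonoOn_sin.monotoneOn ⟨by linarith, by linarith⟩ ⟨by linarith, hx⟩ h1
  · rw [← Real.sin_pi_sub x]
    exact Real.strictMonoOn_sin.monotoneOn ⟨by linarith, by linarith⟩
      ⟨by linarith, by linarith⟩ (by linarith)

/-- Key estimate: if `πδ/S ≤ a`, `a + πh/S ≤ b`, `b ≤ π - πδ/S`, with `h ≤ 2δ`,
`2δ + h ≤ 2S`, then `cos a - cos b ≥ cos(πδ/S) - cos(π(δ+h)/S)`. -/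
lemma aux_key {S δ h a b : ℝ} (hS : 0 < S) (hδ : 0 < δ) (hh0 : 0 < h)
    (h2δ : h ≤ 2 * δ) (hsum : 2 * δ + h ≤ 2 * S)
    (ha : Real.pi * δ / S ≤ a) (hab : a + Real.pi * h / S ≤ b)
    (hb : b ≤ Real.pi - Real.pi * δ / S) :
    Real.cos (Real.pi * δ / S) - Real.cos (Real.pi * (δ + h) / S) ≤
      Real.cos a - Real.cos b := by
  have hpi := Real.pi_pos
  have hB : Real.cos (Real.pi * δ / S) - Real.cos (Real.pi * (δ + h) / S)
      = 2 * Real.sin (Real.pi * (2 * δ + h) / (2 * S)) * Real.sin (Real.pi * h / (2 * S)) := by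
    rw [Real.cos_sub_cos,
      show (Real.pi * δ / S + Real.pi * (δ + h) / S) / 2
        = Real.pi * (2 * δ + h) / (2 * S) by field_simp; ring,
      show (Real.pi * δ / S - Real.pi * (δ + h) / S) / 2
        = -(Real.pi * h / (2 * S)) by field_simp; ring,
      Real.sin_neg]
    ring
  have hC : Real.cos a - Real.cos b
      = 2 * Real.sin ((a + b) / 2) * Real.sin ((b - a) / 2) := by
    rw [Real.cos_sub_cos, show (a - b) / 2 = -((b - a) / 2) by ring, Real.sin_neg]
    ring
  rw [hB, hC]
  have ht12 : Real.pi * h / S ≤ 2 * (Real.pi * δ / S) := by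
    rw [show 2 * (Real.pi * δ / S) = Real.pi * (2 * δ) / S by ring]
    gcongr
  have hδS : 0 < Real.pi * δ / S := by positivity
  have hhS : 0 < Real.pi * h / S := by positivity
  have e1 : Real.pi * h / (2 * S) = (Real.pi * h / S) / 2 := by ring
  have e2 : Real.pi * (2 * δ + h) / (2 * S)
      = (Real.pi * δ / S) + (Real.pi * h / S) / 2 := by field_simp
  have s1 : Real.sin (Real.pi * h / (2 * S)) ≤ Real.sin ((b - a) / 2) := by
    apply aux_sin_lb (by positivity) (by rw [e1]; linarith)
    rw [e1]; linarith
  have s2 : Real.sin (Real.pi * (2 * δ + h) / (2 * S)) ≤ Real.sin ((a + b) / 2) := by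
    apply aux_sin_lb (by positivity) (by rw [e2]; linarith)
    rw [e2]; linarith
  have n1 : 0 ≤ Real.sin (Real.pi * h / (2 * S)) := by
    apply Real.sin_nonneg_of_nonneg_of_le_pi (by positivity)
    rw [div_le_iff₀ (by linarith : (0:ℝ) < 2 * S)]
    nlinarith
  have n2 : 0 ≤ Real.sin (Real.pi * (2 * δ + h) / (2 * S)) := by
    apply Real.sin_nonneg_of_nonneg_of_le_pi (by positivity)
    rw [div_le_iff₀ (by linarith : (0:ℝ) < 2 * S)]
    nlinarith
  nlinarith [mul_le_mul s2 s1 n1 (n2.trans s2)]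

/-- Pairwise bound for nodes `i*h+δ < m*h+δ`. -/
lemma aux_pair (L δ h : ℝ) (hL : 0 < L) (hδ : 0 < δ) (hh0 : 0 < h) (h2δ : h ≤ 2 * δ)
    (i m : ℝ) (hi : 0 ≤ i) (him : i + 1 ≤ m) (hm : m * h ≤ L) :
    Real.cos (Real.pi * δ / (L + 2 * δ)) - Real.cos (Real.pi * (δ + h) / (L + 2 * δ)) ≤
      Real.cos (Real.pi * (i * h + δ) / (L + 2 * δ)) -
        Real.cos (Real.pi * (m * h + δ) / (L + 2 * δ)) := by
  have hpi := Real.pi_pos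
  have hS : (0:ℝ) < L + 2 * δ := by linarith
  apply aux_key hS hδ hh0 h2δ (by linarith)
  · apply div_le_div_of_nonneg_right ?_ hS.le
    nlinarith [mul_nonneg (mul_nonneg hpi.le hi) hh0.le]
  · rw [show Real.pi * (i * h + δ) / (L + 2 * δ) + Real.pi * h / (L + 2 * δ)
        = Real.pi * ((i + 1) * h + δ) / (L + 2 * δ) by field_simp; ring]
    apply div_le_div_of_nonneg_right ?_ hS.le
    nlinarith [mul_le_mul_of_nonneg_right him hh0.le,
      mul_le_mul_of_nonneg_left (mul_le_mul_of_nonneg_right him hh0.le) hpi.le]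
  · rw [le_sub_iff_add_le, ← add_div, div_le_iff₀ hS]
    nlinarith

/-- Lower bound for the denominator product of the trigonometric Lagrange basis:
for the equally spaced nodes `z_k = (k−1)h + δ`, `h = L/(N−1) < 2δ`,
`∏_{k≠j} |cos(πz_j/(L+2δ)) − cos(πz_k/(L+2δ))|
  ≥ |cos(πδ/(L+2δ)) − cos(π(δ+h)/(L+2δ))|^{N−1}`. -/
theorem stmt_6 (L δ : ℝ) (hL : 0 < L) (hδ : 0 < δ) (N : ℕ) (hN : 3 ≤ N)
    (hh : L / ((N : ℝ) - 1) < 2 * δ) (j : Fin N) :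
    |Real.cos (Real.pi * δ / (L + 2*δ)) -
        Real.cos (Real.pi * (δ + L / ((N : ℝ) - 1)) / (L + 2*δ))| ^ (N - 1) ≤
      ∏ k ∈ Finset.univ.erase j,
        |Real.cos (Real.pi * (((j : ℕ) : ℝ) * (L / ((N : ℝ) - 1)) + δ) / (L + 2*δ)) -
         Real.cos (Real.pi * (((k : ℕ) : ℝ) * (L / ((N : ℝ) - 1)) + δ) / (L + 2*δ))| := by
  have hpi := Real.pi_pos
  have hN1 : (2:ℝ) ≤ (N : ℝ) - 1 := by
    have : (3:ℝ) ≤ (N : ℝ) := by exact_mod_cast hN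
    linarith
  set h : ℝ := L / ((N : ℝ) - 1) with hhdef
  have hh0 : 0 < h := div_pos hL (by linarith)
  have hNh : ((N : ℝ) - 1) * h = L := by
    rw [hhdef, mul_div_cancel₀ _ (by linarith : ((N:ℝ) - 1) ≠ 0)]
  have hS : (0:ℝ) < L + 2 * δ := by linarith
  -- the base is nonnegative: cos is antitone on [0, π]
  have hbase : 0 ≤ Real.cos (Real.pi * δ / (L + 2*δ)) -
      Real.cos (Real.pi * (δ + h) / (L + 2*δ)) := by
    have h1 : Real.cos (Real.pi * (δ + h) / (L + 2*δ)) ≤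
        Real.cos (Real.pi * δ / (L + 2*δ)) := by
      have hhL : h ≤ L := by nlinarith [mul_le_mul_of_nonneg_right hN1 hh0.le]
      apply Real.cos_le_cos_of_nonneg_of_le_pi (by positivity)
      · rw [div_le_iff₀ hS]
        nlinarith [mul_le_mul_of_nonneg_left (show δ + h ≤ L + 2 * δ by linarith) hpi.le]
      · gcongr <;> linarith
    linarith
  rw [abs_of_nonneg hbase]
  have hcard : (Finset.univ.erase j).card = N - 1 := by
    rw [Finset.card_erase_of_mem (Finset.mem_univ j), Finset.card_univ, Fintype.card_fin]
  rw [← hcard, ← Finset.prod_const]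
  apply Finset.prod_le_prod
  · intro k _; exact hbase
  · intro k hk
    have hkj : k ≠ j := Finset.ne_of_mem_erase hk
    have hb : ∀ m : Fin N, ((m : ℕ) : ℝ) * h ≤ L := by
      intro m
      have hm : ((m : ℕ) : ℝ) ≤ (N : ℝ) - 1 := by
        have := m.isLt
        have : ((m : ℕ) : ℝ) ≤ (N : ℝ) - 1 := by
          have h1 : (m : ℕ) ≤ N - 1 := Nat.le_pred_of_lt m.isLt
          have h2 : ((m : ℕ) : ℝ) ≤ ((N - 1 : ℕ) : ℝ) := by exact_mod_cast h1
          have h3 : ((N - 1 : ℕ) : ℝ) = (N : ℝ) - 1 := by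
            have : 1 ≤ N := by omega
            push_cast [this]; ring
          linarith [h2, h3.le]
        exact this
      calc ((m : ℕ) : ℝ) * h ≤ ((N : ℝ) - 1) * h := by
            apply mul_le_mul_of_nonneg_right hm hh0.le
        _ = L := hNh
    rcases lt_or_gt_of_ne (fun e => hkj (Fin.ext e)) with hlt | hlt
    · -- k < j : nodes x_k < x_j
      rw [abs_sub_comm]
      have key := aux_pair L δ h hL hδ hh0 hh.le ((k : ℕ) : ℝ) ((j : ℕ) : ℝ)
        (Nat.cast_nonneg _) (by exact_mod_cast Nat.succ_le_of_lt hlt) (hb j)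
      calc Real.cos (Real.pi * δ / (L + 2*δ)) -
            Real.cos (Real.pi * (δ + h) / (L + 2*δ)) ≤ _ := key
        _ ≤ _ := le_abs_self _
    · -- j < k
      have key := aux_pair L δ h hL hδ hh0 hh.le ((j : ℕ) : ℝ) ((k : ℕ) : ℝ)
        (Nat.cast_nonneg _) (by exact_mod_cast Nat.succ_le_of_lt hlt) (hb k)
      calc Real.cos (Real.pi * δ / (L + 2*δ)) -
            Real.cos (Real.pi * (δ + h) / (L + 2*δ)) ≤ _ := key
        _ ≤ _ := le_abs_self _
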